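/- Scaled Poincaré inequality on a single cell for functions vanishing on a set of positive measure: Let d, m ≥ 1, let Y = (0,1)^d and let E ⊂ Y be a measurable set of positive Lebesgue measure. Then there exists a constant C > 0, depending only on E, such that for every ε > 0, every y₀ ∈ ℝ^d, and every continuously differentiable function v : ℝ^d → ℝ^m that vanishes on y₀ + εE, one has ∫_{y₀ + εY} |v(x)|² dx ≤ C · ε² · ∫_{y₀ + εY} ‖Dv(x)‖² dx. -/

import Mathlib

/-!
For `x ∈ Y` and `y ∈ E`, the fundamental theorem of calculus along the segment from `y` to `x`,
Jensen's inequality on `[0, 1]` and `|x - y|² ≤ d` give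
`|v x|² ≤ d ∫₀¹ ‖Dv((1 - t) y + t x)‖² dt`. Integrate over `y ∈ E` and `x ∈ Y`. For fixed `t`,
integrate first in whichever of `x`, `y` carries the weight `≥ 1/2`: that homothety maps `Y` into
itself with Jacobian `≥ 2⁻ᵈ`, so `|E| ∫_Y |v|² ≤ d 2ᵈ ∫_Y ‖Dv‖²`. The cell `y₀ + εY` is reduced to
`Y` by the substitution `x = y₀ + εz`, which scales `‖Dv‖²` by `ε²`.
-/

open MeasureTheory

/-- The open unit cell `Y = (0,1)^d` in `ℝ^d`. -/
def unitCell (d : ℕ) : Set (Fin d → ℝ) :=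
  Set.pi Set.univ fun _ => Set.Ioo (0 : ℝ) 1

/-- The translated `ε`-scaled copy `y₀ + εS` of a set `S ⊆ ℝ^d`. -/
def translatedScaled {d : ℕ} (y₀ : Fin d → ℝ) (ε : ℝ) (S : Set (Fin d → ℝ)) :
    Set (Fin d → ℝ) :=
  (fun y => y₀ + ε • y) '' S

open Set ENNReal AffineMap

theorem setLIntegral_image_add_smul {E : Type*} [NormedAddCommGroup E] [NormedSpace ℝ E]
    [FiniteDimensional ℝ E] [MeasurableSpace E] [BorelSpace E] (μ : Measure E)
    [μ.IsAddHaarMeasure] {s : Set E} (hs : MeasurableSet s) (c : E) {a : ℝ} (ha : a ≠ 0)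
    (f : E → ℝ≥0∞) :
    ∫⁻ x in (fun z => c + a • z) '' s, f x ∂μ
      = ENNReal.ofReal (|a| ^ Module.finrank ℝ E) * ∫⁻ z in s, f (c + a • z) ∂μ := by
  have hderiv : ∀ z ∈ s, HasFDerivWithinAt (fun z => c + a • z)
      (a • ContinuousLinearMap.id ℝ E) s z := fun z _ =>
    (((hasFDerivAt_id z).const_smul a).const_add c).hasFDerivWithinAt
  have hinj : InjOn (fun z => c + a • z) s := fun z _ w _ h =>
    smul_right_injective E ha (add_left_cancel h)
  rw [lintegral_image_eq_lintegral_abs_det_fderiv_mul μ hs hderiv hinj,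
    ← lintegral_const_mul' _ _ ofReal_ne_top]
  simp [ContinuousLinearMap.det, abs_pow]

theorem sq_setIntegral_Ioc_le {f : ℝ → ℝ} (hf : Continuous f) :
    (∫ t in Ioc (0 : ℝ) 1, f t) ^ 2 ≤ ∫ t in Ioc (0 : ℝ) 1, f t ^ 2 := by
  have : IsProbabilityMeasure (volume.restrict (Ioc (0 : ℝ) 1)) := ⟨by simp⟩
  exact (even_two.convexOn_pow (𝕜 := ℝ)).map_integral_le (continuous_pow 2).continuousOn
    isClosed_univ (by simp) hf.integrableOn_Ioc (hf.pow 2).integrableOn_Ioc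

theorem sub_eq_intervalIntegral_fderiv_lineMap {E F : Type*} [NormedAddCommGroup E]
    [NormedSpace ℝ E] [NormedAddCommGroup F] [NormedSpace ℝ F] [CompleteSpace F]
    {g : E → F} (hg : ContDiff ℝ 1 g) (x y : E) :
    g x - g y = ∫ t in (0 : ℝ)..1, fderiv ℝ g (lineMap y x t) (x - y) := by
  have hderiv : ∀ t ∈ uIcc (0 : ℝ) 1,
      HasDerivAt (fun t => g (lineMap y x t)) (fderiv ℝ g (lineMap y x t) (x - y)) t :=
    fun t _ => (hg.differentiable one_ne_zero _).hasFDerivAt.comp_hasDerivAt t hasDerivAt_lineMap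
  have hcont : Continuous fun t : ℝ => fderiv ℝ g (lineMap y x t) (x - y) :=
    ((hg.continuous_fderiv one_ne_zero).comp (by fun_prop)).clm_apply continuous_const
  rw [intervalIntegral.integral_eq_sub_of_hasDerivAt hderiv (hcont.intervalIntegrable _ _)]
  simp

theorem integral_le_mul_integral_of_lintegral_le {α : Type*} [MeasurableSpace α]
    {μ : Measure α} {f g : α → ℝ} (hf : Integrable f μ) (hg : Integrable g μ)
    (hf₀ : 0 ≤ᵐ[μ] f) (hg₀ : 0 ≤ᵐ[μ] g) {c : ℝ} (hc : 0 ≤ c)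
    (h : ∫⁻ x, ENNReal.ofReal (f x) ∂μ ≤ ENNReal.ofReal c * ∫⁻ x, ENNReal.ofReal (g x) ∂μ) :
    ∫ x, f x ∂μ ≤ c * ∫ x, g x ∂μ := by
  rwa [← ENNReal.ofReal_le_ofReal_iff (mul_nonneg hc (integral_nonneg_of_ae hg₀)),
    ENNReal.ofReal_mul hc, ofReal_integral_eq_lintegral_ofReal hf hf₀,
    ofReal_integral_eq_lintegral_ofReal hg hg₀]

section UnitCell

variable {d : ℕ}

theorem measurableSet_unitCell : MeasurableSet (unitCell d) :=
  MeasurableSet.univ_pi fun _ => measurableSet_Ioo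

theorem volume_unitCell : volume (unitCell d) = 1 := by
  simp [unitCell, volume_pi_pi]

theorem convex_unitCell : Convex ℝ (unitCell d) :=
  convex_pi fun _ _ => convex_Ioo 0 1

theorem sum_sq_sub_le_of_mem_unitCell {x y : Fin d → ℝ} (hx : x ∈ unitCell d)
    (hy : y ∈ unitCell d) : ∑ j, (x - y) j ^ 2 ≤ d := by
  calc ∑ j, (x - y) j ^ 2 ≤ ∑ _j : Fin d, (1 : ℝ) := Finset.sum_le_sum fun j _ => by
        have hxj := hx j (mem_univ j)
        have hyj := hy j (mem_univ j)
        simp only [mem_Ioo] at hxj hyj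
        simp only [Pi.sub_apply]
        nlinarith
    _ = d := by simp

theorem setLIntegral_unitCell_le_of_forall_le {f : (Fin d → ℝ) → ℝ≥0∞} {c : ℝ≥0∞}
    (hf : ∀ x ∈ unitCell d, f x ≤ c) : ∫⁻ x in unitCell d, f x ≤ c :=
  (setLIntegral_mono' measurableSet_unitCell hf).trans (by simp [volume_unitCell])

theorem setLIntegral_unitCell_comp_homothety_le (f : (Fin d → ℝ) → ℝ≥0∞) {a : ℝ}
    (ha : 1 / 2 ≤ a) (ha₁ : a ≤ 1) {b : Fin d → ℝ} (hb : b ∈ unitCell d) :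
    ∫⁻ z in unitCell d, f ((1 - a) • b + a • z) ≤ 2 ^ d * ∫⁻ z in unitCell d, f z := by
  have ha₀ : 0 < a := by linarith
  have himage : (fun z => (1 - a) • b + a • z) '' unitCell d ⊆ unitCell d :=
    image_subset_iff.2 fun z hz => convex_unitCell hb hz (by linarith) ha₀.le (by ring)
  have hscale := setLIntegral_image_add_smul volume measurableSet_unitCell ((1 - a) • b)
    ha₀.ne' f
  rw [abs_of_pos ha₀, Module.finrank_fin_fun] at hscale
  calc ∫⁻ z in unitCell d, f ((1 - a) • b + a • z)
      ≤ ENNReal.ofReal ((2 * a) ^ d) * ∫⁻ z in unitCell d, f ((1 - a) • b + a • z) :=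
        le_mul_of_one_le_left' (ENNReal.one_le_ofReal.2 (one_le_pow₀ (by linarith)))
    _ = 2 ^ d * ∫⁻ x in (fun z => (1 - a) • b + a • z) '' unitCell d, f x := by
        rw [hscale, mul_pow, ENNReal.ofReal_mul (by positivity), ENNReal.ofReal_pow zero_le_two]
        simp [mul_assoc]
    _ ≤ 2 ^ d * ∫⁻ z in unitCell d, f z := mul_le_mul_right (lintegral_mono_set himage) _

theorem lintegral_lintegral_comp_lineMap_le {G : (Fin d → ℝ) → ℝ≥0∞} (hG : Measurable G)
    {t : ℝ} (ht : t ∈ Ioc (0 : ℝ) 1) :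
    ∫⁻ x in unitCell d, ∫⁻ y in unitCell d, G (lineMap y x t)
      ≤ 2 ^ d * ∫⁻ z in unitCell d, G z := by
  rcases le_total t (1 / 2) with hle | hge
  · refine setLIntegral_unitCell_le_of_forall_le fun x hx => ?_
    simpa [lineMap_apply_module, add_comm] using
      setLIntegral_unitCell_comp_homothety_le G (a := 1 - t) (by linarith) (by linarith [ht.1])
        hx
  · rw [lintegral_lintegral_swap (by fun_prop)]
    refine setLIntegral_unitCell_le_of_forall_le fun y hy => ?_
    simpa [lineMap_apply_module] using
      setLIntegral_unitCell_comp_homothety_le G hge ht.2 hy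

theorem lintegral_lintegral_lintegral_comp_lineMap_le {G : (Fin d → ℝ) → ℝ≥0∞}
    (hG : Measurable G) :
    ∫⁻ x in unitCell d, ∫⁻ y in unitCell d, ∫⁻ t in Ioc (0 : ℝ) 1, G (lineMap y x t)
      ≤ 2 ^ d * ∫⁻ z in unitCell d, G z := by
  calc ∫⁻ x in unitCell d, ∫⁻ y in unitCell d, ∫⁻ t in Ioc (0 : ℝ) 1, G (lineMap y x t)
      = ∫⁻ x in unitCell d, ∫⁻ t in Ioc (0 : ℝ) 1, ∫⁻ y in unitCell d, G (lineMap y x t) :=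
        lintegral_congr fun x => lintegral_lintegral_swap (by fun_prop)
    _ = ∫⁻ t in Ioc (0 : ℝ) 1, ∫⁻ x in unitCell d, ∫⁻ y in unitCell d, G (lineMap y x t) :=
        lintegral_lintegral_swap (Measurable.lintegral_prod_right'
          (f := fun q : ((Fin d → ℝ) × ℝ) × (Fin d → ℝ) => G (lineMap q.2 q.1.1 q.1.2))
          (by fun_prop)).aemeasurable
    _ ≤ ∫⁻ _ in Ioc (0 : ℝ) 1, 2 ^ d * ∫⁻ z in unitCell d, G z :=
        setLIntegral_mono' measurableSet_Ioc fun t ht =>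
          lintegral_lintegral_comp_lineMap_le hG ht
    _ = 2 ^ d * ∫⁻ z in unitCell d, G z := by simp

theorem integrableOn_translatedScaled_unitCell {f : (Fin d → ℝ) → ℝ}
    (hf : Continuous f) (y₀ : Fin d → ℝ) (ε : ℝ) :
    IntegrableOn f (translatedScaled y₀ ε (unitCell d)) := by
  have hK : IsCompact (translatedScaled y₀ ε (Set.pi univ fun _ => Icc 0 1)) :=
    (isCompact_univ_pi fun _ => isCompact_Icc).image (by fun_prop)
  exact (hf.continuousOn.integrableOn_compact hK).mono_set
    (image_mono (pi_mono fun _ _ => Ioo_subset_Icc_self))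

end UnitCell

section Jacobian

variable {d m : ℕ}

noncomputable def jacobianFrobeniusSq (v : (Fin d → ℝ) → Fin m → ℝ) (x : Fin d → ℝ) : ℝ :=
  ∑ i, ∑ j, (fderiv ℝ (fun z => v z i) x (Pi.single j 1)) ^ 2

theorem jacobianFrobeniusSq_nonneg (v : (Fin d → ℝ) → Fin m → ℝ) (x : Fin d → ℝ) :
    0 ≤ jacobianFrobeniusSq v x := by
  unfold jacobianFrobeniusSq; positivity

theorem continuous_jacobianFrobeniusSq {v : (Fin d → ℝ) → Fin m → ℝ} (hv : ContDiff ℝ 1 v) :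
    Continuous (jacobianFrobeniusSq v) :=
  continuous_finsetSum _ fun i _ => continuous_finsetSum _ fun _ _ =>
    (((contDiff_pi.1 hv i).continuous_fderiv one_ne_zero).clm_apply continuous_const).pow 2

theorem sum_sq_fderiv_apply_le (v : (Fin d → ℝ) → Fin m → ℝ) (x u : Fin d → ℝ) :
    ∑ i, (fderiv ℝ (fun z => v z i) x u) ^ 2 ≤ (∑ j, u j ^ 2) * jacobianFrobeniusSq v x := by
  rw [jacobianFrobeniusSq, Finset.mul_sum]
  refine Finset.sum_le_sum fun i _ => ?_
  have hu : u = ∑ j, u j • (Pi.single j 1 : Fin d → ℝ) := by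
    ext k; simp [Pi.single_apply]
  conv_lhs => rw [hu, map_sum]
  simpa only [map_smul, smul_eq_mul] using Finset.sum_mul_sq_le_sq_mul_sq _ _ _

theorem jacobianFrobeniusSq_comp_add_smul {v : (Fin d → ℝ) → Fin m → ℝ}
    (hv : Differentiable ℝ v) (y₀ : Fin d → ℝ) (ε : ℝ) (z : Fin d → ℝ) :
    jacobianFrobeniusSq (fun x => v (y₀ + ε • x)) z
      = ε ^ 2 * jacobianFrobeniusSq v (y₀ + ε • z) := by
  simp only [jacobianFrobeniusSq, Finset.mul_sum]
  refine Finset.sum_congr rfl fun i _ => Finset.sum_congr rfl fun j _ => ?_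
  have hvi : HasFDerivAt (fun w => v w i) (fderiv ℝ (fun w => v w i) (y₀ + ε • z))
      (y₀ + ε • z) :=
    ((differentiable_pi.1 hv i) _).hasFDerivAt
  have haff : HasFDerivAt (fun x => y₀ + ε • x) (ε • ContinuousLinearMap.id ℝ _) z :=
    ((hasFDerivAt_id z).const_smul ε).const_add y₀
  rw [show (fun x => v (y₀ + ε • x) i) = (fun w => v w i) ∘ (fun x => y₀ + ε • x) from rfl,
    (hvi.comp z haff).fderiv]
  simp [mul_pow]

end Jacobian

section Poincare

variable {d m : ℕ} {v : (Fin d → ℝ) → Fin m → ℝ} {E : Set (Fin d → ℝ)}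

theorem sum_sq_le_setIntegral_jacobianFrobeniusSq_lineMap (hv : ContDiff ℝ 1 v)
    {x y : Fin d → ℝ} (hx : x ∈ unitCell d) (hy : y ∈ unitCell d) (hvy : v y = 0) :
    ∑ i, v x i ^ 2 ≤ d * ∫ t in Ioc (0 : ℝ) 1, jacobianFrobeniusSq v (lineMap y x t) := by
  set f : Fin m → ℝ → ℝ := fun i t => fderiv ℝ (fun z => v z i) (lineMap y x t) (x - y)
  have hf : ∀ i, Continuous (f i) := fun i =>
    (((contDiff_pi.1 hv i).continuous_fderiv one_ne_zero).comp (by fun_prop)).clm_apply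
      continuous_const
  have hvx : ∀ i, v x i = ∫ t in Ioc (0 : ℝ) 1, f i t := fun i => by
    have := sub_eq_intervalIntegral_fderiv_lineMap (contDiff_pi.1 hv i) x y
    rwa [hvy, Pi.zero_apply, sub_zero, intervalIntegral.integral_of_le zero_le_one] at this
  have hJ : Continuous fun t => jacobianFrobeniusSq v (lineMap y x t) :=
    (continuous_jacobianFrobeniusSq hv).comp (lineMap_continuous (R := ℝ))
  calc ∑ i, v x i ^ 2 ≤ ∑ i, ∫ t in Ioc (0 : ℝ) 1, f i t ^ 2 :=
        Finset.sum_le_sum fun i _ => hvx i ▸ sq_setIntegral_Ioc_le (hf i)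
    _ = ∫ t in Ioc (0 : ℝ) 1, ∑ i, f i t ^ 2 :=
        (integral_finsetSum _ fun i _ => ((hf i).pow 2).integrableOn_Ioc).symm
    _ ≤ ∫ t in Ioc (0 : ℝ) 1, d * jacobianFrobeniusSq v (lineMap y x t) := by
        refine setIntegral_mono_on
          (continuous_finsetSum _ fun i _ => (hf i).pow 2).integrableOn_Ioc
          (continuous_const.mul hJ).integrableOn_Ioc measurableSet_Ioc fun t _ => ?_
        exact (sum_sq_fderiv_apply_le v _ _).trans (mul_le_mul_of_nonneg_right
          (sum_sq_sub_le_of_mem_unitCell hx hy) (jacobianFrobeniusSq_nonneg v _))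
    _ = d * ∫ t in Ioc (0 : ℝ) 1, jacobianFrobeniusSq v (lineMap y x t) := integral_const_mul _ _

theorem volume_mul_setLIntegral_unitCell_sum_sq_le (hEsub : E ⊆ unitCell d)
    (hEmeas : MeasurableSet E) (hv : ContDiff ℝ 1 v) (hvE : ∀ y ∈ E, v y = 0) :
    volume E * ∫⁻ x in unitCell d, ENNReal.ofReal (∑ i, v x i ^ 2)
      ≤ d * 2 ^ d * ∫⁻ x in unitCell d, ENNReal.ofReal (jacobianFrobeniusSq v x) := by
  have hG : Measurable fun z => ENNReal.ofReal (jacobianFrobeniusSq v z) :=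
    (continuous_jacobianFrobeniusSq hv).measurable.ennreal_ofReal
  have hsegment : ∀ x ∈ unitCell d, ∀ y ∈ E,
      ENNReal.ofReal (∑ i, v x i ^ 2)
        ≤ d * ∫⁻ t in Ioc (0 : ℝ) 1, ENNReal.ofReal (jacobianFrobeniusSq v (lineMap y x t)) := by
    intro x hx y hy
    have hJ : IntegrableOn (fun t => jacobianFrobeniusSq v (lineMap y x t)) (Ioc (0 : ℝ) 1) :=
      ((continuous_jacobianFrobeniusSq hv).comp (lineMap_continuous (R := ℝ))).integrableOn_Ioc
    rw [← ofReal_integral_eq_lintegral_ofReal hJ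
      (ae_of_all _ fun t => jacobianFrobeniusSq_nonneg v _),
      ← ENNReal.ofReal_natCast, ← ENNReal.ofReal_mul (Nat.cast_nonneg d)]
    exact ENNReal.ofReal_le_ofReal
      (sum_sq_le_setIntegral_jacobianFrobeniusSq_lineMap hv hx (hEsub hy) (hvE y hy))
  calc volume E * ∫⁻ x in unitCell d, ENNReal.ofReal (∑ i, v x i ^ 2)
      = ∫⁻ x in unitCell d, ∫⁻ _ in E, ENNReal.ofReal (∑ i, v x i ^ 2) := by
        simp only [setLIntegral_const, mul_comm _ (volume E)]
        exact (lintegral_const_mul' _ _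
          (measure_ne_top_of_subset (μ := volume) hEsub (by simp [volume_unitCell]))).symm
    _ ≤ ∫⁻ x in unitCell d, ∫⁻ y in E,
          d * ∫⁻ t in Ioc (0 : ℝ) 1, ENNReal.ofReal (jacobianFrobeniusSq v (lineMap y x t)) :=
        setLIntegral_mono' measurableSet_unitCell fun x hx =>
          setLIntegral_mono' hEmeas (hsegment x hx)
    _ ≤ d * ∫⁻ x in unitCell d, ∫⁻ y in unitCell d,
          ∫⁻ t in Ioc (0 : ℝ) 1, ENNReal.ofReal (jacobianFrobeniusSq v (lineMap y x t)) := by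
        simp only [lintegral_const_mul' _ _ (ENNReal.natCast_ne_top d)]
        gcongr with x
    _ ≤ d * 2 ^ d * ∫⁻ x in unitCell d, ENNReal.ofReal (jacobianFrobeniusSq v x) := by
        rw [mul_assoc]
        gcongr
        exact lintegral_lintegral_lintegral_comp_lineMap_le hG

theorem volume_mul_setLIntegral_translatedScaled_sum_sq_le (hEsub : E ⊆ unitCell d)
    (hEmeas : MeasurableSet E) {ε : ℝ} (hε : 0 < ε) (y₀ : Fin d → ℝ) (hv : ContDiff ℝ 1 v)
    (hvE : ∀ x ∈ translatedScaled y₀ ε E, v x = 0) :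
    volume E * ∫⁻ x in translatedScaled y₀ ε (unitCell d), ENNReal.ofReal (∑ i, v x i ^ 2)
      ≤ d * 2 ^ d * ENNReal.ofReal (ε ^ 2) *
        ∫⁻ x in translatedScaled y₀ ε (unitCell d), ENNReal.ofReal (jacobianFrobeniusSq v x) := by
  have hcell := volume_mul_setLIntegral_unitCell_sum_sq_le hEsub hEmeas
    (v := fun z => v (y₀ + ε • z)) (by fun_prop) fun y hy => hvE _ ⟨y, hy, rfl⟩
  simp only [jacobianFrobeniusSq_comp_add_smul (hv.differentiable one_ne_zero),
    ENNReal.ofReal_mul (sq_nonneg ε), lintegral_const_mul' _ _ ENNReal.ofReal_ne_top] at hcell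
  simp only [translatedScaled, setLIntegral_image_add_smul volume measurableSet_unitCell y₀ hε.ne']
  rw [mul_left_comm]
  exact (mul_le_mul_right hcell _).trans_eq (by ring)

end Poincare

theorem scaled_poincare_single_cell_general {d m : ℕ} (hd : 1 ≤ d)
    (E : Set (Fin d → ℝ)) (hEsub : E ⊆ unitCell d)
    (hEmeas : MeasurableSet E) (hEpos : 0 < volume E) :
    ∃ C : ℝ, 0 < C ∧
      ∀ (ε : ℝ), 0 < ε → ∀ (y₀ : Fin d → ℝ),
        ∀ v : (Fin d → ℝ) → (Fin m → ℝ), ContDiff ℝ 1 v →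
          (∀ x ∈ translatedScaled y₀ ε E, v x = 0) →
          ∫ x in translatedScaled y₀ ε (unitCell d), ∑ i, (v x i) ^ 2
            ≤ C * ε ^ 2 *
              ∫ x in translatedScaled y₀ ε (unitCell d),
                ∑ i, ∑ j, (fderiv ℝ (fun z => v z i) x (Pi.single j 1)) ^ 2 := by
  have hEfin := measure_ne_top_of_subset (μ := volume) hEsub (by simp [volume_unitCell])
  set K : ℝ≥0∞ := d * 2 ^ d / volume E
  have hK : K ≠ ∞ := ENNReal.div_ne_top (by finiteness) hEpos.ne'
  refine ⟨K.toReal, ENNReal.toReal_pos (ENNReal.div_ne_zero.2 ⟨by positivity, hEfin⟩) hK,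
    fun ε hε y₀ v hv hvE => ?_⟩
  refine integral_le_mul_integral_of_lintegral_le (g := jacobianFrobeniusSq v)
    (integrableOn_translatedScaled_unitCell (by have := hv.continuous; fun_prop) y₀ ε)
    (integrableOn_translatedScaled_unitCell (continuous_jacobianFrobeniusSq hv) y₀ ε)
    (ae_of_all _ fun x => by positivity) (ae_of_all _ (jacobianFrobeniusSq_nonneg v))
    (by positivity) ?_
  calc _ ≤ d * 2 ^ d * ENNReal.ofReal (ε ^ 2) * _ / volume E :=
        (ENNReal.le_div_iff_mul_le (.inl hEpos.ne') (.inl hEfin)).2 <| by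
          rw [mul_comm]
          exact volume_mul_setLIntegral_translatedScaled_sum_sq_le hEsub hEmeas hε y₀ hv hvE
    _ = _ := by
        rw [ENNReal.ofReal_mul ENNReal.toReal_nonneg, ENNReal.ofReal_toReal hK]
        simp only [K, div_eq_mul_inv]
        ring

/-- **Scaled Poincaré inequality on a single cell for functions vanishing on a set of
positive measure**: if `E ⊆ (0,1)^d` has positive measure, then there is `C > 0`
(depending only on `E`) such that for every `ε > 0`, every `y₀ ∈ ℝ^d`, and every `C¹`
function `v : ℝ^d → ℝ^m` vanishing on `y₀ + εE`,
`∫_{y₀+εY} |v|² ≤ C ε² ∫_{y₀+εY} ‖Dv‖²`. -/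
theorem scaled_poincare_single_cell {d m : ℕ} (hd : 1 ≤ d) (hm : 1 ≤ m)
    (E : Set (Fin d → ℝ)) (hEsub : E ⊆ unitCell d)
    (hEmeas : MeasurableSet E) (hEpos : 0 < volume E) :
    ∃ C : ℝ, 0 < C ∧
      ∀ (ε : ℝ), 0 < ε → ∀ (y₀ : Fin d → ℝ),
        ∀ v : (Fin d → ℝ) → (Fin m → ℝ), ContDiff ℝ 1 v →
          (∀ x ∈ translatedScaled y₀ ε E, v x = 0) →
          ∫ x in translatedScaled y₀ ε (unitCell d), ∑ i, (v x i) ^ 2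
            ≤ C * ε ^ 2 *
              ∫ x in translatedScaled y₀ ε (unitCell d),
                ∑ i, ∑ j, (fderiv ℝ (fun z => v z i) x (Pi.single j 1)) ^ 2 :=
  scaled_poincare_single_cell_general hd E hEsub hEmeas hEpos
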